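/- Let K be an algebraically closed field and k ≥ 1. If X = (V₁, V₂, α, β, η) is a finite-dimensional Γ_con-module whose endomorphism space (the K-vector space of morphisms X → X) is one-dimensional, then X is isomorphic as a representation to exactly one of the four modules S₁ = (K, 0), S₂ = (0, K), M₁ = (K, K, α = id, β = 0, η = 0), M₂ = (K, K, α = 0, β = id, η = 0). In particular Γ_con has exactly four bricks. -/

import Mathlib

/-- A finite-dimensional module over the contraction algebra `Γ_con` (the path algebra of
the quiver with two vertices, arrows `a : 1 → 2`, `b : 2 → 1` and a loop `y` at vertex `2`,
modulo `y^k = ba`, `ay = 0`, `yb = 0`), given concretely as a representation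
`(V₁, V₂, α, β, η)` with `α ∘ β = η^k`, `η ∘ α = 0` and `β ∘ η = 0`. -/
structure GamRep (K : Type) [Field K] (k : ℕ) : Type 1 where
  V1 : Type
  V2 : Type
  [acg1 : AddCommGroup V1]
  [acg2 : AddCommGroup V2]
  [mod1 : Module K V1]
  [mod2 : Module K V2]
  [fd1 : FiniteDimensional K V1]
  [fd2 : FiniteDimensional K V2]
  α : V1 →ₗ[K] V2
  β : V2 →ₗ[K] V1
  η : V2 →ₗ[K] V2
  rel1 : α ∘ₗ β = η ^ k
  rel2 : η ∘ₗ α = 0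
  rel3 : β ∘ₗ η = 0

attribute [instance] GamRep.acg1 GamRep.acg2 GamRep.mod1 GamRep.mod2 GamRep.fd1 GamRep.fd2

namespace GamRep

variable {K : Type} [Field K] {k : ℕ}

/-- A morphism of `Γ_con`-modules is a pair of linear maps commuting with the three
structure maps. -/
def IsHom (M N : GamRep K k) (φ1 : M.V1 →ₗ[K] N.V1) (φ2 : M.V2 →ₗ[K] N.V2) : Prop :=
  φ2 ∘ₗ M.α = N.α ∘ₗ φ1 ∧ φ1 ∘ₗ M.β = N.β ∘ₗ φ2 ∧ φ2 ∘ₗ M.η = N.η ∘ₗ φ2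

/-- An isomorphism of `Γ_con`-modules is a pair of linear isomorphisms commuting with the
structure maps. -/
def Iso (M N : GamRep K k) : Prop :=
  ∃ (φ1 : M.V1 ≃ₗ[K] N.V1) (φ2 : M.V2 ≃ₗ[K] N.V2),
    M.IsHom N (φ1 : M.V1 →ₗ[K] N.V1) (φ2 : M.V2 →ₗ[K] N.V2)

/-- The zero representation: both underlying vector spaces are trivial. -/
def IsZero (M : GamRep K k) : Prop := Subsingleton M.V1 ∧ Subsingleton M.V2

theorem prodMap_pow {V W : Type} [AddCommGroup V] [Module K V] [AddCommGroup W] [Module K W]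
    (f : V →ₗ[K] V) (g : W →ₗ[K] W) (n : ℕ) :
    (f.prodMap g) ^ n = (f ^ n).prodMap (g ^ n) := by
  induction n with
  | zero => ext <;> simp
  | succ n ih => rw [pow_succ, pow_succ, pow_succ, ih, LinearMap.prodMap_mul]

/-- The direct sum of two representations, taken componentwise. -/
def dsum (M N : GamRep K k) : GamRep K k where
  V1 := M.V1 × N.V1
  V2 := M.V2 × N.V2
  α := M.α.prodMap N.α
  β := M.β.prodMap N.β
  η := M.η.prodMap N.η
  rel1 := by
    rw [show (M.α.prodMap N.α) ∘ₗ (M.β.prodMap N.β) = (M.α ∘ₗ M.β).prodMap (N.α ∘ₗ N.β) from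
      LinearMap.prodMap_comp _ _ _ _, M.rel1, N.rel1, prodMap_pow]
  rel2 := by
    rw [show (M.η.prodMap N.η) ∘ₗ (M.α.prodMap N.α) = (M.η ∘ₗ M.α).prodMap (N.η ∘ₗ N.α) from
      LinearMap.prodMap_comp _ _ _ _, M.rel2, N.rel2, LinearMap.prodMap_zero]
  rel3 := by
    rw [show (M.β.prodMap N.β) ∘ₗ (M.η.prodMap N.η) = (M.β ∘ₗ M.η).prodMap (N.β ∘ₗ N.η) from
      LinearMap.prodMap_comp _ _ _ _, M.rel3, N.rel3, LinearMap.prodMap_zero]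

/-- A representation is indecomposable if it is nonzero and not isomorphic to a direct sum
of two nonzero representations. -/
def Indecomposable (M : GamRep K k) : Prop :=
  ¬ M.IsZero ∧ ∀ N P : GamRep K k, M.Iso (N.dsum P) → N.IsZero ∨ P.IsZero

/-- The endomorphism space of a representation, as a `K`-subspace of the product of the two
spaces of linear endomorphisms. -/
def endSpace (M : GamRep K k) :
    Submodule K ((M.V1 →ₗ[K] M.V1) × (M.V2 →ₗ[K] M.V2)) where
  carrier := {φ | M.IsHom M φ.1 φ.2}
  zero_mem' := by
    refine ⟨?_, ?_, ?_⟩ <;> simp [LinearMap.zero_comp, LinearMap.comp_zero]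
  add_mem' := by
    rintro φ ψ ⟨h1, h2, h3⟩ ⟨h4, h5, h6⟩
    refine ⟨?_, ?_, ?_⟩
    · simp only [Prod.fst_add, Prod.snd_add, LinearMap.add_comp, LinearMap.comp_add, h1, h4]
    · simp only [Prod.fst_add, Prod.snd_add, LinearMap.add_comp, LinearMap.comp_add, h2, h5]
    · simp only [Prod.fst_add, Prod.snd_add, LinearMap.add_comp, LinearMap.comp_add, h3, h6]
  smul_mem' := by
    rintro c φ ⟨h1, h2, h3⟩
    refine ⟨?_, ?_, ?_⟩
    · simp only [Prod.smul_fst, Prod.smul_snd, LinearMap.smul_comp, LinearMap.comp_smul, h1]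
    · simp only [Prod.smul_fst, Prod.smul_snd, LinearMap.smul_comp, LinearMap.comp_smul, h2]
    · simp only [Prod.smul_fst, Prod.smul_snd, LinearMap.smul_comp, LinearMap.comp_smul, h3]

variable (K)

/-- The simple module `S₁ = (K, 0)` with all structure maps zero (a representation whenever
`k ≥ 1`). -/
def S1 (hk : 1 ≤ k) : GamRep K k where
  V1 := K
  V2 := PUnit
  α := 0
  β := 0
  η := 0
  rel1 := by rw [LinearMap.zero_comp, zero_pow (Nat.one_le_iff_ne_zero.mp hk)]
  rel2 := by rw [LinearMap.comp_zero]
  rel3 := by rw [LinearMap.comp_zero]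

/-- The simple module `S₂ = (0, K)` with all structure maps zero (a representation whenever
`k ≥ 1`). -/
def S2 (hk : 1 ≤ k) : GamRep K k where
  V1 := PUnit
  V2 := K
  α := 0
  β := 0
  η := 0
  rel1 := by rw [LinearMap.zero_comp, zero_pow (Nat.one_le_iff_ne_zero.mp hk)]
  rel2 := by rw [LinearMap.comp_zero]
  rel3 := by rw [LinearMap.comp_zero]

/-- The module `M₁ = (K, K, α = id, β = 0, η = 0)` (a representation whenever `k ≥ 1`). -/
def M1 (hk : 1 ≤ k) : GamRep K k where
  V1 := K
  V2 := K
  α := LinearMap.id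
  β := 0
  η := 0
  rel1 := by rw [LinearMap.comp_zero, zero_pow (Nat.one_le_iff_ne_zero.mp hk)]
  rel2 := by rw [LinearMap.zero_comp]
  rel3 := by rw [LinearMap.comp_zero]

/-- The module `M₂ = (K, K, α = 0, β = id, η = 0)` (a representation whenever `k ≥ 1`). -/
def M2 (hk : 1 ≤ k) : GamRep K k where
  V1 := K
  V2 := K
  α := 0
  β := LinearMap.id
  η := 0
  rel1 := by rw [LinearMap.zero_comp, zero_pow (Nat.one_le_iff_ne_zero.mp hk)]
  rel2 := by rw [LinearMap.comp_zero]
  rel3 := by rw [LinearMap.comp_zero]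

end GamRep

/-!
In a brick every endomorphism is a scalar, so every nilpotent endomorphism vanishes.
Since `η ^ (k + 1) = αβη = 0`, the nilpotent endomorphism `(0, η)` gives `η = 0`; then
`αβ = η ^ k = 0`, and the endomorphism `(βα, αβ)`, being nilpotent, gives `βα = 0` too.
Now for every `ψ : V₂ → V₁` the pair `(ψα, αψ)` is an endomorphism, hence a scalar `c`;
if `α ≠ 0` one can choose `ψ` with `c ≠ 0`, making `α` invertible. So `α`, and likewise `β`,
is zero or bijective, and `αβ = 0` leaves three cases, in which every endomorphism of the
nonzero vertex spaces extends to one of `X`, so these spaces are one-dimensional. The four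
modules are told apart by `(dim V₁, dim V₂, rank α)`.
-/

open Module Function

section LinearAlgebra

variable {K V W : Type} [Field K] [AddCommGroup V] [Module K V] [AddCommGroup W] [Module K W]

theorem finrank_le_one_of_forall_eq_smul_id
    (h : ∀ f : V →ₗ[K] V, ∃ c : K, f = c • LinearMap.id) : finrank K V ≤ 1 := by
  rcases subsingleton_or_nontrivial V with hV | hV
  · simp [finrank_zero_of_subsingleton]
  obtain ⟨v, hv⟩ := exists_ne (0 : V)
  obtain ⟨φ, hφ⟩ := Projective.exists_dual_eq_one K hv
  refine finrank_le_one v fun w => ?_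
  obtain ⟨c, hc⟩ := h (LinearMap.toSpanSingleton K V w ∘ₗ φ)
  exact ⟨c, by simpa [hφ] using (LinearMap.congr_fun hc v).symm⟩

theorem LinearMap.eq_zero_or_bijective_of_forall_comp_eq_smul_id (f : V →ₗ[K] W)
    (h : ∀ g : W →ₗ[K] V, ∃ c : K, g ∘ₗ f = c • LinearMap.id ∧ f ∘ₗ g = c • LinearMap.id) :
    f = 0 ∨ Bijective f := by
  refine or_iff_not_imp_left.mpr fun hf => ?_
  obtain ⟨v, hv⟩ : ∃ v, f v ≠ 0 := by
    by_contra! h0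
    exact hf (LinearMap.ext h0)
  obtain ⟨φ, hφ⟩ := Projective.exists_dual_eq_one K hv
  set g := LinearMap.toSpanSingleton K V v ∘ₗ φ
  obtain ⟨c, hgf, hfg⟩ := h g
  have hgf' (x : V) : g (f x) = c • x := LinearMap.congr_fun hgf x
  have hfg' (w : W) : f (g w) = c • w := LinearMap.congr_fun hfg w
  have hc : c ≠ 0 := by
    rintro rfl
    exact hv (by simpa [g, hφ] using congrArg f (hgf' v))
  refine ⟨fun x y hxy => smul_right_injective V hc ?_, fun w => ⟨c⁻¹ • g w, ?_⟩⟩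
  · simpa [hgf'] using congrArg g hxy
  · rw [map_smul, hfg', inv_smul_smul₀ hc]

theorem eq_zero_of_isNilpotent_of_eq_smul_id {f : V →ₗ[K] V} {c : K}
    (hf : f = c • LinearMap.id) (hn : IsNilpotent f) : f = 0 := by
  obtain ⟨n, hn⟩ := hn
  rw [hf, smul_pow, End.id_pow, smul_eq_zero] at hn
  rcases hn with hc | hid
  · rw [hf, eq_zero_of_pow_eq_zero hc, zero_smul]
  · rw [hf, hid, smul_zero]

end LinearAlgebra

namespace GamRep

variable {K : Type} [Field K] {k : ℕ}

theorem iso_S1 (hk : 1 ≤ k) {X : GamRep K k} (h1 : finrank K X.V1 = 1) [Subsingleton X.V2] :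
    X.Iso (S1 K hk) := by
  have : Subsingleton (S1 K hk).V2 := inferInstanceAs (Subsingleton PUnit)
  obtain ⟨φ1⟩ : Nonempty (X.V1 ≃ₗ[K] K) := ⟨.ofFinrankEq _ _ (by simp [h1])⟩
  exact ⟨φ1, LinearEquiv.ofSubsingleton X.V2 PUnit,
    Subsingleton.elim _ _, Subsingleton.elim _ _, Subsingleton.elim _ _⟩

theorem iso_S2 (hk : 1 ≤ k) {X : GamRep K k} [Subsingleton X.V1] (h2 : finrank K X.V2 = 1)
    (hη : X.η = 0) : X.Iso (S2 K hk) := by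
  have : Subsingleton (S2 K hk).V1 := inferInstanceAs (Subsingleton PUnit)
  obtain ⟨φ2⟩ : Nonempty (X.V2 ≃ₗ[K] K) := ⟨.ofFinrankEq _ _ (by simp [h2])⟩
  refine ⟨LinearEquiv.ofSubsingleton X.V1 PUnit, φ2,
    Subsingleton.elim _ _, Subsingleton.elim _ _, ?_⟩
  rw [hη, LinearMap.comp_zero]
  exact (LinearMap.zero_comp _).symm

theorem iso_M1 (hk : 1 ≤ k) {X : GamRep K k} (hα : Bijective X.α) (hβ : X.β = 0) (hη : X.η = 0)
    (h1 : finrank K X.V1 = 1) : X.Iso (M1 K hk) := by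
  obtain ⟨φ1⟩ : Nonempty (X.V1 ≃ₗ[K] K) := ⟨.ofFinrankEq _ _ (by simp [h1])⟩
  refine ⟨φ1, (LinearEquiv.ofBijective X.α hα).symm.trans φ1, ?_, ?_, ?_⟩
  · ext x
    exact congrArg φ1 (LinearEquiv.ofBijective_symm_apply_apply X.α x)
  · rw [hβ, LinearMap.comp_zero]
    exact (LinearMap.zero_comp _).symm
  · rw [hη, LinearMap.comp_zero]
    exact (LinearMap.zero_comp _).symm

theorem iso_M2 (hk : 1 ≤ k) {X : GamRep K k} (hβ : Bijective X.β) (hα : X.α = 0) (hη : X.η = 0)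
    (h2 : finrank K X.V2 = 1) : X.Iso (M2 K hk) := by
  obtain ⟨φ2⟩ : Nonempty (X.V2 ≃ₗ[K] K) := ⟨.ofFinrankEq _ _ (by simp [h2])⟩
  refine ⟨(LinearEquiv.ofBijective X.β hβ).symm.trans φ2, φ2, ?_, ?_, ?_⟩
  · rw [hα, LinearMap.comp_zero]
    exact (LinearMap.zero_comp _).symm
  · ext x
    exact congrArg φ2 (LinearEquiv.ofBijective_symm_apply_apply X.β x)
  · rw [hη, LinearMap.comp_zero]
    exact (LinearMap.zero_comp _).symm

def IsBrick (X : GamRep K k) : Prop := finrank K X.endSpace = 1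

theorem isHom_id (X : GamRep K k) : X.IsHom X LinearMap.id LinearMap.id := by
  simp [IsHom]

theorem isHom_zero_eta (X : GamRep K k) : X.IsHom X 0 X.η :=
  ⟨by rw [X.rel2, LinearMap.comp_zero], by rw [X.rel3, LinearMap.zero_comp], rfl⟩

theorem isHom_beta_comp_alpha (X : GamRep K k) : X.IsHom X (X.β ∘ₗ X.α) (X.α ∘ₗ X.β) := by
  refine ⟨LinearMap.comp_assoc _ _ _, LinearMap.comp_assoc _ _ _, ?_⟩
  rw [LinearMap.comp_assoc, X.rel3, LinearMap.comp_zero, ← LinearMap.comp_assoc, X.rel2,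
    LinearMap.zero_comp]

theorem isNilpotent_eta (X : GamRep K k) : IsNilpotent X.η :=
  ⟨k + 1, by rw [pow_succ, ← X.rel1, End.mul_eq_comp, LinearMap.comp_assoc, X.rel3,
    LinearMap.comp_zero]⟩

namespace IsBrick

variable {X : GamRep K k}

theorem not_isZero (hX : X.IsBrick) : ¬ X.IsZero := by
  rintro ⟨h1, h2⟩
  have : Subsingleton X.endSpace := inferInstance
  exact one_ne_zero (hX.symm.trans finrank_zero_of_subsingleton)

theorem exists_eq_smul_id (hX : X.IsBrick) {φ1 : X.V1 →ₗ[K] X.V1} {φ2 : X.V2 →ₗ[K] X.V2}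
    (hφ : X.IsHom X φ1 φ2) : ∃ c : K, φ1 = c • LinearMap.id ∧ φ2 = c • LinearMap.id := by
  set e : X.endSpace := ⟨(LinearMap.id, LinearMap.id), X.isHom_id⟩
  have he : e ≠ 0 := by
    intro he
    refine hX.not_isZero ⟨?_, ?_⟩ <;> refine subsingleton_of_forall_eq 0 fun v => ?_
    · simpa [e] using LinearMap.congr_fun (congrArg (fun x : X.endSpace => x.1.1) he) v
    · simpa [e] using LinearMap.congr_fun (congrArg (fun x : X.endSpace => x.1.2) he) v
  obtain ⟨c, hc⟩ := (finrank_eq_one_iff_of_nonzero' e he).mp hX ⟨(φ1, φ2), hφ⟩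
  exact ⟨c, (congrArg (fun x : X.endSpace => x.1.1) hc).symm,
    (congrArg (fun x : X.endSpace => x.1.2) hc).symm⟩

theorem eq_zero_of_isNilpotent (hX : X.IsBrick) {φ1 : X.V1 →ₗ[K] X.V1} {φ2 : X.V2 →ₗ[K] X.V2}
    (hφ : X.IsHom X φ1 φ2) (h1 : IsNilpotent φ1) (h2 : IsNilpotent φ2) : φ1 = 0 ∧ φ2 = 0 := by
  obtain ⟨c, hc1, hc2⟩ := hX.exists_eq_smul_id hφ
  exact ⟨eq_zero_of_isNilpotent_of_eq_smul_id hc1 h1, eq_zero_of_isNilpotent_of_eq_smul_id hc2 h2⟩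

theorem eta_eq_zero (hX : X.IsBrick) : X.η = 0 :=
  (hX.eq_zero_of_isNilpotent X.isHom_zero_eta IsNilpotent.zero X.isNilpotent_eta).2

theorem alpha_comp_beta_eq_zero (hX : X.IsBrick) (hk : k ≠ 0) : X.α ∘ₗ X.β = 0 := by
  rw [X.rel1, hX.eta_eq_zero, zero_pow hk]

theorem beta_comp_alpha_eq_zero (hX : X.IsBrick) (hk : k ≠ 0) : X.β ∘ₗ X.α = 0 := by
  have hαβ := hX.alpha_comp_beta_eq_zero hk
  refine (hX.eq_zero_of_isNilpotent X.isHom_beta_comp_alpha ⟨2, ?_⟩ ⟨1, ?_⟩).1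
  · rw [sq, End.mul_eq_comp, LinearMap.comp_assoc, ← LinearMap.comp_assoc X.α, hαβ,
      LinearMap.zero_comp, LinearMap.comp_zero]
  · rw [pow_one, hαβ]

theorem isHom_comp_alpha (hX : X.IsBrick) (hk : k ≠ 0) (ψ : X.V2 →ₗ[K] X.V1) :
    X.IsHom X (ψ ∘ₗ X.α) (X.α ∘ₗ ψ) := by
  refine ⟨LinearMap.comp_assoc _ _ _, ?_, ?_⟩
  · rw [LinearMap.comp_assoc, hX.alpha_comp_beta_eq_zero hk, LinearMap.comp_zero,
      ← LinearMap.comp_assoc, hX.beta_comp_alpha_eq_zero hk, LinearMap.zero_comp]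
  · rw [hX.eta_eq_zero, LinearMap.comp_zero, LinearMap.zero_comp]

theorem isHom_beta_comp (hX : X.IsBrick) (hk : k ≠ 0) (χ : X.V1 →ₗ[K] X.V2) :
    X.IsHom X (X.β ∘ₗ χ) (χ ∘ₗ X.β) := by
  refine ⟨?_, LinearMap.comp_assoc _ _ _, ?_⟩
  · rw [LinearMap.comp_assoc, hX.beta_comp_alpha_eq_zero hk, LinearMap.comp_zero,
      ← LinearMap.comp_assoc, hX.alpha_comp_beta_eq_zero hk, LinearMap.zero_comp]
  · rw [hX.eta_eq_zero, LinearMap.comp_zero, LinearMap.zero_comp]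

theorem alpha_eq_zero_or_bijective (hX : X.IsBrick) (hk : k ≠ 0) : X.α = 0 ∨ Bijective X.α :=
  X.α.eq_zero_or_bijective_of_forall_comp_eq_smul_id fun ψ =>
    hX.exists_eq_smul_id (hX.isHom_comp_alpha hk ψ)

theorem beta_eq_zero_or_bijective (hX : X.IsBrick) (hk : k ≠ 0) : X.β = 0 ∨ Bijective X.β :=
  X.β.eq_zero_or_bijective_of_forall_comp_eq_smul_id fun χ =>
    (hX.exists_eq_smul_id (hX.isHom_beta_comp hk χ)).imp fun _ => And.symm

theorem finrank_V1_eq_one (hX : X.IsBrick) [Nontrivial X.V1]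
    (hext : ∀ φ1, ∃ φ2, X.IsHom X φ1 φ2) : finrank K X.V1 = 1 :=
  le_antisymm (finrank_le_one_of_forall_eq_smul_id fun φ1 =>
    let ⟨_, hφ⟩ := hext φ1; (hX.exists_eq_smul_id hφ).imp fun _ => And.left) finrank_pos

theorem finrank_V2_eq_one (hX : X.IsBrick) [Nontrivial X.V2]
    (hext : ∀ φ2, ∃ φ1, X.IsHom X φ1 φ2) : finrank K X.V2 = 1 :=
  le_antisymm (finrank_le_one_of_forall_eq_smul_id fun φ2 =>
    let ⟨_, hφ⟩ := hext φ2; (hX.exists_eq_smul_id hφ).imp fun _ => And.right) finrank_pos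

theorem iso_S1_or_iso_S2 (hX : X.IsBrick) (hk : 1 ≤ k) (hα : X.α = 0) (hβ : X.β = 0) :
    X.Iso (S1 K hk) ∨ X.Iso (S2 K hk) := by
  have hη := hX.eta_eq_zero
  have hext1 (φ1 : X.V1 →ₗ[K] X.V1) : X.IsHom X φ1 0 := by simp [IsHom, hα, hβ]
  have hext2 (φ2 : X.V2 →ₗ[K] X.V2) : X.IsHom X 0 φ2 := by simp [IsHom, hα, hβ, hη]
  rcases subsingleton_or_nontrivial X.V2 with h2 | h2
  · have : Nontrivial X.V1 :=
      not_subsingleton_iff_nontrivial.mp fun h1 => hX.not_isZero ⟨h1, h2⟩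
    exact .inl (iso_S1 hk (hX.finrank_V1_eq_one fun φ1 => ⟨0, hext1 φ1⟩))
  · have h1 : Subsingleton X.V1 := by
      obtain ⟨c, hc1, hc2⟩ := hX.exists_eq_smul_id (hext1 LinearMap.id)
      have hc : c = 0 := (smul_eq_zero.mp hc2.symm).resolve_right
        (LinearMap.ne_zero_of_injective injective_id)
      rw [hc, zero_smul] at hc1
      exact subsingleton_of_forall_eq 0 fun v => by simpa using LinearMap.congr_fun hc1 v
    exact .inr (iso_S2 hk (hX.finrank_V2_eq_one fun φ2 => ⟨0, hext2 φ2⟩) hη)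

theorem iso_M1_of_bijective_alpha (hX : X.IsBrick) (hk : 1 ≤ k) (hα : Bijective X.α) :
    X.Iso (M1 K hk) := by
  have hη := hX.eta_eq_zero
  have hβ : X.β = 0 := by
    ext v
    exact hα.1 (by simpa using LinearMap.congr_fun (hX.alpha_comp_beta_eq_zero (by omega)) v)
  have : Nontrivial X.V1 := not_subsingleton_iff_nontrivial.mp fun h1 =>
    hX.not_isZero ⟨h1, hα.2.subsingleton⟩
  set e := LinearEquiv.ofBijective X.α hα
  refine iso_M1 hk hα hβ hη (hX.finrank_V1_eq_one fun φ1 =>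
    ⟨X.α ∘ₗ φ1 ∘ₗ e.symm, ?_, ?_, ?_⟩)
  · ext x
    simp [e]
  · rw [hβ, LinearMap.comp_zero, LinearMap.zero_comp]
  · rw [hη, LinearMap.comp_zero, LinearMap.zero_comp]

theorem iso_M2_of_bijective_beta (hX : X.IsBrick) (hk : 1 ≤ k) (hβ : Bijective X.β) :
    X.Iso (M2 K hk) := by
  have hη := hX.eta_eq_zero
  have hα : X.α = 0 := by
    ext v
    exact hβ.1 (by simpa using LinearMap.congr_fun (hX.beta_comp_alpha_eq_zero (by omega)) v)
  have : Nontrivial X.V2 := not_subsingleton_iff_nontrivial.mp fun h2 =>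
    hX.not_isZero ⟨hβ.2.subsingleton, h2⟩
  set e := LinearEquiv.ofBijective X.β hβ
  refine iso_M2 hk hβ hα hη (hX.finrank_V2_eq_one fun φ2 =>
    ⟨X.β ∘ₗ φ2 ∘ₗ e.symm, ?_, ?_, ?_⟩)
  · rw [hα, LinearMap.comp_zero, LinearMap.zero_comp]
  · ext x
    simp [e]
  · rw [hη, LinearMap.comp_zero, LinearMap.zero_comp]

theorem exists_iso (hX : X.IsBrick) (hk : 1 ≤ k) :
    ∃ i : Fin 4, X.Iso (![S1 K hk, S2 K hk, M1 K hk, M2 K hk] i) := by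
  rcases hX.alpha_eq_zero_or_bijective (by omega) with hα | hα
  · rcases hX.beta_eq_zero_or_bijective (by omega) with hβ | hβ
    · rcases hX.iso_S1_or_iso_S2 hk hα hβ with h | h
      exacts [⟨0, h⟩, ⟨1, h⟩]
    · exact ⟨3, hX.iso_M2_of_bijective_beta hk hβ⟩
  · exact ⟨2, hX.iso_M1_of_bijective_alpha hk hα⟩

end IsBrick

noncomputable def invariants (X : GamRep K k) : ℕ × ℕ × ℕ :=
  (finrank K X.V1, finrank K X.V2, finrank K (LinearMap.range X.α))

theorem Iso.invariants_eq {X Y : GamRep K k} (h : X.Iso Y) : X.invariants = Y.invariants := by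
  obtain ⟨φ1, φ2, hα, -, -⟩ := h
  have hrange : LinearMap.range Y.α = (LinearMap.range X.α).map (φ2 : X.V2 →ₗ[K] Y.V2) := by
    rw [← LinearMap.range_comp, hα, LinearMap.range_comp_of_range_eq_top _ φ1.range]
  rw [invariants, invariants, φ1.finrank_eq, φ2.finrank_eq, hrange, φ2.finrank_map_eq]

-- `change` exposes the concrete spaces: `simp` does not see through the instance projections
-- `(S1 K hk).mod1`, ... of the models.
theorem invariants_S1 (hk : 1 ≤ k) : (S1 K hk).invariants = (1, 0, 0) := by
  change (finrank K K, finrank K PUnit, finrank K (LinearMap.range (0 : K →ₗ[K] PUnit))) = _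
  simp [finrank_zero_of_subsingleton]

theorem invariants_S2 (hk : 1 ≤ k) : (S2 K hk).invariants = (0, 1, 0) := by
  change (finrank K PUnit, finrank K K, finrank K (LinearMap.range (0 : PUnit →ₗ[K] K))) = _
  simp [finrank_zero_of_subsingleton]

theorem invariants_M1 (hk : 1 ≤ k) : (M1 K hk).invariants = (1, 1, 1) := by
  change (finrank K K, finrank K K, finrank K (LinearMap.range (LinearMap.id : K →ₗ[K] K))) = _
  rw [LinearMap.range_id]
  simp

theorem invariants_M2 (hk : 1 ≤ k) : (M2 K hk).invariants = (1, 1, 0) := by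
  change (finrank K K, finrank K K, finrank K (LinearMap.range (0 : K →ₗ[K] K))) = _
  simp

variable (K) in
theorem invariants_injective (hk : 1 ≤ k) :
    Injective fun i : Fin 4 => (![S1 K hk, S2 K hk, M1 K hk, M2 K hk] i).invariants := by
  have hval (i : Fin 4) : (![S1 K hk, S2 K hk, M1 K hk, M2 K hk] i).invariants =
      ![(1, 0, 0), (0, 1, 0), (1, 1, 1), (1, 1, 0)] i := by
    fin_cases i
    exacts [invariants_S1 hk, invariants_S2 hk, invariants_M1 hk, invariants_M2 hk]
  simp only [hval]
  decide

end GamRep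

theorem gam_bricks_general (K : Type) [Field K] (k : ℕ) (hk : 1 ≤ k)
    (X : GamRep K k) (h : Module.finrank K X.endSpace = 1) :
    ∃! i : Fin 4,
      X.Iso (![GamRep.S1 K hk, GamRep.S2 K hk, GamRep.M1 K hk, GamRep.M2 K hk] i) := by
  obtain ⟨i, hi⟩ := GamRep.IsBrick.exists_iso h hk
  exact ⟨i, hi, fun j hj =>
    GamRep.invariants_injective K hk (hj.invariants_eq.symm.trans hi.invariants_eq)⟩

/-- If a finite-dimensional `Γ_con`-module `X` has a one-dimensional endomorphism space,
then `X` is isomorphic to exactly one of the four modules `S₁ = (K, 0)`, `S₂ = (0, K)`,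
`M₁ = (K, K, α = id, β = 0, η = 0)`, `M₂ = (K, K, α = 0, β = id, η = 0)`.  In particular
`Γ_con` has exactly four bricks. -/
theorem gam_bricks (K : Type) [Field K] [IsAlgClosed K] (k : ℕ) (hk : 1 ≤ k)
    (X : GamRep K k) (h : Module.finrank K X.endSpace = 1) :
    ∃! i : Fin 4,
      X.Iso (![GamRep.S1 K hk, GamRep.S2 K hk, GamRep.M1 K hk, GamRep.M2 K hk] i) :=
  gam_bricks_general K k hk X h
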